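/- (Iteration step in the Carleson proof.) Suppose 0 < ρ < 1, γ > 0, and x, z ∈ 𝒞 ∩ B_{2R}(y) satisfy: δ(x) < (1 − ((1+ρ)/2)^{1/γ}) (2R − |x−y|)/(8√d), u(x) ≤ ρ u(z), and |z − x_0| ≤ 3√d δ(x) where |x − x_0| = δ(x). Then (2R − |x−y|)^γ u(x) ≤ (2ρ/(1+ρ)) (2R − |z−y|)^γ u(z). In particular, setting θ_0 = 2ρ/(1+ρ) < 1, one gets (2R − |x−y|)^γ u(x) ≤ θ_0 · max_{x' ∈ 𝒞 ∩ B_{2R}(y)} (2R − |x'−y|)^γ u(x'). -/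

import Mathlib

/-!
Moving from `x` to `z` costs at most `|z - x| ≤ |z - x₀| + |x₀ - x| ≤ 4√d δ(x)`, so the smallness
of `δ(x)` gives `2R - |z - y| ≥ ((1 + ρ)/2)^{1/γ} (2R - |x - y|)`. Raising this to the power `γ`
turns the weight loss into the factor `(1 + ρ)/2`, which together with `u(x) ≤ ρ u(z)` yields the
contraction factor `2ρ/(1 + ρ)`. The maximum is a supremum over a finite set of lattice points.
-/

open Finset

/-- Points of `ℤ^d` written as `ℤ × ℤ^{d-1}` (so `d = m + 1`). -/
abbrev Pt (m : ℕ) := ℤ × (Fin m → ℤ)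

/-- The Euclidean norm of a lattice point. -/
noncomputable def enorm {m : ℕ} (x : Pt m) : ℝ :=
  Real.sqrt ((x.1 : ℝ) ^ 2 + ∑ i, ((x.2 i : ℝ)) ^ 2)

/-- The `Γ`-boundary `∂A = {x ∉ A : x = z + e, z ∈ A, e ∈ Γ}`. -/
def gbdry {m : ℕ} (Γ : Finset (Pt m)) (A : Set (Pt m)) : Set (Pt m) :=
  {x | x ∉ A ∧ ∃ z ∈ A, ∃ e ∈ Γ, x = z + e}

/-- The closure `A ∪ ∂A`. -/
def gcl {m : ℕ} (Γ : Finset (Pt m)) (A : Set (Pt m)) : Set (Pt m) :=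
  A ∪ gbdry Γ A

/-- `u` is harmonic at `x`: `u x = ∑_{e ∈ Γ} π x e * u (x + e)`. -/
def HarmAt {m : ℕ} (Γ : Finset (Pt m)) (π : Pt m → Pt m → ℝ)
    (u : Pt m → ℝ) (x : Pt m) : Prop :=
  u x = ∑ e ∈ Γ, π x e * u (x + e)

/-- The discrete Euclidean ball of center `y` and radius `R`. -/
def ball {m : ℕ} (y : Pt m) (R : ℝ) : Set (Pt m) := {x | _root_.enorm (x - y) ≤ R}

/-- The discrete cube of center `y` and side `2R`. -/
def cube {m : ℕ} (y : Pt m) (R : ℝ) : Set (Pt m) :=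
  {x | |((x.1 - y.1 : ℤ) : ℝ)| ≤ R ∧ ∀ i, |((x.2 i - y.2 i : ℤ) : ℝ)| ≤ R}

/-- Coercion of an integer vector to Euclidean space. -/
def toE {m : ℕ} (x : Fin m → ℤ) : EuclideanSpace ℝ (Fin m) := WithLp.toLp 2 (fun i => (x i : ℝ))

/-- The Lipschitz domain `𝒞 = {(x₁, x') ∈ ℤ^d : x₁ > φ(x')}`. -/
def dom {m : ℕ} (φ : EuclideanSpace ℝ (Fin m) → ℝ) : Set (Pt m) :=
  {x | φ (toE x.2) < (x.1 : ℝ)}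

/-- `δ(x)`: Euclidean distance from `x` to the boundary of `C`. -/
noncomputable def distToBdry {m : ℕ} (Γ : Finset (Pt m))
    (C : Set (Pt m)) (x : Pt m) : ℝ :=
  sInf ((fun z => _root_.enorm (x - z)) '' gbdry Γ C)

/-- `Γ` contains all standard unit vectors. -/
def UnitVecs {m : ℕ} (Γ : Finset (Pt m)) : Prop :=
  ((1 : ℤ), (0 : Fin m → ℤ)) ∈ Γ ∧ ∀ i, ((0 : ℤ), Pi.single i (1 : ℤ)) ∈ Γ

/-- `π` is a transition kernel: `π(x,e) ∈ [0,1]` and `∑_{e ∈ Γ} π(x,e) = 1`. -/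
def Kernel {m : ℕ} (Γ : Finset (Pt m)) (π : Pt m → Pt m → ℝ) : Prop :=
  (∀ x e, 0 ≤ π x e) ∧ (∀ x e, π x e ≤ 1) ∧ ∀ x, ∑ e ∈ Γ, π x e = 1

/-- The walk is centered: `∑_{e ∈ Γ} π(x,e) e = 0`. -/
def Centered {m : ℕ} (Γ : Finset (Pt m)) (π : Pt m → Pt m → ℝ) : Prop :=
  ∀ x, (∑ e ∈ Γ, π x e * (e.1 : ℝ)) = 0 ∧ ∀ i, (∑ e ∈ Γ, π x e * (e.2 i : ℝ)) = 0

/-- Uniform ellipticity: `π(x,e) ≥ α` for all `x` and `e ∈ Γ`. -/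
def Elliptic {m : ℕ} (Γ : Finset (Pt m)) (π : Pt m → Pt m → ℝ) (α : ℝ) : Prop :=
  ∀ x e, e ∈ Γ → α ≤ π x e

/-- `φ` is `A`-Lipschitz with `φ 0 = 0`. -/
def LipA {m : ℕ} (A : ℝ) (φ : EuclideanSpace ℝ (Fin m) → ℝ) : Prop :=
  (∀ a b, |φ a - φ b| ≤ A * ‖a - b‖) ∧ φ 0 = 0

/-- `𝒟_{R,r}(y) = B_R(y) ∩ {x ∈ 𝒞 : δ(x) > r}`. -/
noncomputable def sliceD {m : ℕ} (Γ : Finset (Pt m)) (C : Set (Pt m))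
    (y : Pt m) (R r : ℝ) : Set (Pt m) :=
  ball y R ∩ {x ∈ C | r < distToBdry Γ C x}

/-- `𝒞_{R,r}(y) = (B_R(y) ∩ 𝒞) \ 𝒟_{R,r}(y)`. -/
noncomputable def sliceC {m : ℕ} (Γ : Finset (Pt m)) (C : Set (Pt m))
    (y : Pt m) (R r : ℝ) : Set (Pt m) :=
  (ball y R ∩ C) \ sliceD Γ C y R r

noncomputable def ptToE {m : ℕ} : Pt m →+ EuclideanSpace ℝ (Fin (m + 1)) where
  toFun x := WithLp.toLp 2 (Fin.cons (x.1 : ℝ) fun j => (x.2 j : ℝ))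
  map_zero' := by ext i; cases i using Fin.cases <;> simp
  map_add' a b := by ext i; cases i using Fin.cases <;> simp

section LatticeNorm

variable {m : ℕ}

lemma enorm_eq_norm_ptToE (x : Pt m) : _root_.enorm x = ‖ptToE x‖ := by
  rw [EuclideanSpace.norm_eq, _root_.enorm, Fin.sum_univ_succ]
  simp [ptToE, sq_abs]

lemma enorm_sub_comm (a b : Pt m) : _root_.enorm (a - b) = _root_.enorm (b - a) := by
  simp only [enorm_eq_norm_ptToE, map_sub, norm_sub_rev]

lemma enorm_sub_le_enorm_sub_add_enorm_sub (a b c : Pt m) :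
    _root_.enorm (a - c) ≤ _root_.enorm (a - b) + _root_.enorm (b - c) := by
  simp only [enorm_eq_norm_ptToE, map_sub]
  exact norm_sub_le_norm_sub_add_norm_sub (ptToE a) (ptToE b) (ptToE c)

lemma abs_fst_le_enorm (x : Pt m) : |(x.1 : ℝ)| ≤ _root_.enorm x := by
  simpa [enorm_eq_norm_ptToE, ptToE] using PiLp.norm_apply_le (ptToE x) 0

lemma abs_snd_le_enorm (x : Pt m) (i : Fin m) : |(x.2 i : ℝ)| ≤ _root_.enorm x := by
  simpa [enorm_eq_norm_ptToE, ptToE] using PiLp.norm_apply_le (ptToE x) i.succ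

lemma ball_subset_cube (y : Pt m) (R : ℝ) : ball y R ⊆ cube y R := fun w hw =>
  ⟨by simpa using (abs_fst_le_enorm (w - y)).trans hw,
    fun i => by simpa using (abs_snd_le_enorm (w - y) i).trans hw⟩

lemma cube_finite (y : Pt m) (R : ℝ) : (cube y R).Finite := by
  have hS : {a : ℤ | |(a : ℝ)| ≤ R}.Finite := by
    refine (Set.finite_Icc (-⌈R⌉) ⌈R⌉).subset fun a ha => ?_
    have : ((|a| : ℤ) : ℝ) ≤ ⌈R⌉ := by rw [Int.cast_abs]; exact ha.trans (Int.le_ceil R)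
    exact abs_le.mp (by exact_mod_cast this)
  refine ((hS.prod (Set.Finite.pi fun _ => hS)).preimage
    (f := (· - y)) sub_left_injective.injOn).subset ?_
  exact fun w hw => ⟨by simpa using hw.1, fun i _ => by simpa using hw.2 i⟩

lemma ball_finite (y : Pt m) (R : ℝ) : (ball y R).Finite :=
  (cube_finite y R).subset (ball_subset_cube y R)

lemma mul_sub_enorm_le_sub_enorm {c s δ r : ℝ} {x y z x0 : Pt m} (hs : 1 ≤ s)
    (hδ : _root_.enorm (x - x0) = δ) (hz : _root_.enorm (z - x0) ≤ 3 * s * δ)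
    (hsmall : δ < (1 - c) * (r - _root_.enorm (x - y)) / (8 * s)) :
    c * (r - _root_.enorm (x - y)) ≤ r - _root_.enorm (z - y) := by
  have hδ0 : 0 ≤ δ := hδ ▸ Real.sqrt_nonneg _
  have hzx : _root_.enorm (z - x) ≤ 4 * s * δ := by
    nlinarith [enorm_sub_le_enorm_sub_add_enorm_sub z x0 x, enorm_sub_comm x0 x]
  have hzy := enorm_sub_le_enorm_sub_add_enorm_sub z x y
  have := (lt_div_iff₀ (by linarith)).mp hsmall
  nlinarith

end LatticeNorm

lemma Real.mul_rpow_le_rpow_of_rpow_one_div_mul_le {t a b γ : ℝ} (ht : 0 ≤ t) (ha : 0 ≤ a)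
    (hγ : 0 < γ) (h : t ^ (1 / γ) * a ≤ b) : t * a ^ γ ≤ b ^ γ := by
  have := Real.rpow_le_rpow (by positivity) h hγ.le
  rwa [Real.mul_rpow (by positivity) ha, ← Real.rpow_mul ht, one_div_mul_cancel hγ.ne',
    Real.rpow_one] at this

theorem carleson_iteration_step_general {m : ℕ} (Γ : Finset (Pt m))
    (φ : EuclideanSpace ℝ (Fin m) → ℝ)
    (ρ γ R : ℝ) (hρ0 : 0 < ρ) (hγ : 0 < γ)
    (y x z x0 : Pt m) (u : Pt m → ℝ)
    (hu0 : ∀ w ∈ dom φ ∩ ball y (2 * R), 0 ≤ u w)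
    (hx : x ∈ dom φ ∩ ball y (2 * R)) (hz : z ∈ dom φ ∩ ball y (2 * R))
    (hδ : _root_.enorm (x - x0) = distToBdry Γ (dom φ) x)
    (hsmall : distToBdry Γ (dom φ) x <
      (1 - ((1 + ρ) / 2) ^ (1 / γ)) * (2 * R - _root_.enorm (x - y)) /
        (8 * Real.sqrt ((m : ℝ) + 1)))
    (huz : u x ≤ ρ * u z)
    (hzx0 : _root_.enorm (z - x0) ≤ 3 * Real.sqrt ((m : ℝ) + 1) * distToBdry Γ (dom φ) x) :
    (2 * R - _root_.enorm (x - y)) ^ γ * u x ≤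
        2 * ρ / (1 + ρ) * ((2 * R - _root_.enorm (z - y)) ^ γ * u z) ∧
      (2 * R - _root_.enorm (x - y)) ^ γ * u x ≤
        2 * ρ / (1 + ρ) *
          sSup ((fun w => (2 * R - _root_.enorm (w - y)) ^ γ * u w) '' (dom φ ∩ ball y (2 * R))) := by
  obtain ⟨-, hxb⟩ := hx
  set a := 2 * R - _root_.enorm (x - y)
  set b := 2 * R - _root_.enorm (z - y)
  have ha : 0 ≤ a := sub_nonneg.mpr hxb
  have huz0 : 0 ≤ u z := hu0 z hz
  have hab : ((1 + ρ) / 2) ^ (1 / γ) * a ≤ b :=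
    mul_sub_enorm_le_sub_enorm (Real.one_le_sqrt.mpr (by simp)) hδ hzx0 hsmall
  have hpow : (1 + ρ) / 2 * a ^ γ ≤ b ^ γ :=
    Real.mul_rpow_le_rpow_of_rpow_one_div_mul_le (by positivity) ha hγ hab
  have hstep : a ^ γ * u x ≤ 2 * ρ / (1 + ρ) * (b ^ γ * u z) :=
    calc a ^ γ * u x ≤ a ^ γ * (ρ * u z) := by gcongr
      _ = 2 * ρ / (1 + ρ) * ((1 + ρ) / 2 * a ^ γ * u z) := by field_simp
      _ ≤ 2 * ρ / (1 + ρ) * (b ^ γ * u z) := by gcongr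
  have hsup : b ^ γ * u z ≤
      sSup ((fun w => (2 * R - _root_.enorm (w - y)) ^ γ * u w) '' (dom φ ∩ ball y (2 * R))) :=
    le_csSup ((((ball_finite y (2 * R)).subset Set.inter_subset_right).image _).bddAbove)
      ⟨z, hz, rfl⟩
  exact ⟨hstep, hstep.trans (by gcongr)⟩

/-- the iteration step in the Carleson proof: from the smallness
of `δ(x)`, `u(x) ≤ ρ u(z)` and `|z - x₀| ≤ 3√d δ(x)` one gets
`(2R - |x-y|)^γ u(x) ≤ (2ρ/(1+ρ)) (2R - |z-y|)^γ u(z)`, and hence the bound by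
`θ₀ = 2ρ/(1+ρ) < 1` times the maximum of `(2R - |x'-y|)^γ u(x')`. -/
theorem carleson_iteration_step {m : ℕ} (Γ : Finset (Pt m))
    (φ : EuclideanSpace ℝ (Fin m) → ℝ)
    (ρ γ R : ℝ) (hρ0 : 0 < ρ) (hρ1 : ρ < 1) (hγ : 0 < γ) (hR : 0 < R)
    (y x z x0 : Pt m) (u : Pt m → ℝ)
    (hu0 : ∀ w ∈ dom φ ∩ ball y (2 * R), 0 ≤ u w)
    (hx : x ∈ dom φ ∩ ball y (2 * R)) (hz : z ∈ dom φ ∩ ball y (2 * R))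
    (hx0 : x0 ∈ gbdry Γ (dom φ))
    (hδ : _root_.enorm (x - x0) = distToBdry Γ (dom φ) x)
    (hsmall : distToBdry Γ (dom φ) x <
      (1 - ((1 + ρ) / 2) ^ (1 / γ)) * (2 * R - _root_.enorm (x - y)) /
        (8 * Real.sqrt ((m : ℝ) + 1)))
    (huz : u x ≤ ρ * u z)
    (hzx0 : _root_.enorm (z - x0) ≤ 3 * Real.sqrt ((m : ℝ) + 1) * distToBdry Γ (dom φ) x) :
    (2 * R - _root_.enorm (x - y)) ^ γ * u x ≤
        2 * ρ / (1 + ρ) * ((2 * R - _root_.enorm (z - y)) ^ γ * u z) ∧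
      (2 * R - _root_.enorm (x - y)) ^ γ * u x ≤
        2 * ρ / (1 + ρ) *
          sSup ((fun w => (2 * R - _root_.enorm (w - y)) ^ γ * u w) '' (dom φ ∩ ball y (2 * R))) :=
  carleson_iteration_step_general Γ φ ρ γ R hρ0 hγ y x z x0 u hu0 hx hz hδ hsmall huz hzx0
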